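/- Let μ be a finite Borel measure on S^{n-1} whose support is not contained in any closed hemisphere (∫⟨η,θ⟩₊ dμ(θ) > 0 for all η ∈ S^{n-1}), and let φ : [0,∞) → [0,∞) be continuous and strictly increasing with φ(0)=0, φ(∞)=∞. Suppose (K_j) is a sequence of convex bodies with 0 ∈ K_j and ‖h_{K_j}‖_{φ,μ_j} = 1 for finite Borel measures μ_j on S^{n-1} converging weakly to μ. Then the maximal radii r_j = max_{u∈S^{n-1}} ρ_{K_j}(u) are uniformly bounded: there exists R > 0 with r_j ≤ R for all j. -/

import Mathlib

/-!
If `x ∈ K_j`, then `h_{K_j}(u) ≥ ⟪x, u⟫ ≥ ‖x‖ δ` on the cap `{u : ⟪x / ‖x‖, u⟫ ≥ δ}`. Since `μ`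
charges every open hemisphere, compactness of the sphere and weak convergence give `δ, c > 0`
such that, for all large `j`, every cap of height `δ` has `μ_j`-mass at least `c`; the caps of
height `2δ` around the points of a finite `δ`-net are tested against the continuous functions
`(⟪w, ·⟫ - 2δ)₊ ≤ 𝟙_{cap}`. As `‖h_{K_j}‖_{φ,μ_j} = 1`, some `λ < 2` satisfies
`∫ φ(h_{K_j}/λ) dμ_j ≤ φ(1) μ_j(S)`, whence `φ(‖x‖ δ / 2) c ≤ φ(1) (μ(S) + 1)`, and `φ → ∞`
bounds `‖x‖`. The finitely many remaining `K_j` are compact.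
-/

open MeasureTheory Set Filter

/-- The support function `h_K(u) = sup_{x ∈ K} ⟨x, u⟩` of a set `K ⊆ ℝⁿ`. -/
noncomputable def suppFn (n : ℕ) (K : Set (EuclideanSpace ℝ (Fin n)))
    (u : EuclideanSpace ℝ (Fin n)) : ℝ :=
  sSup ((fun x => (inner ℝ x u : ℝ)) '' K)

/-- The Orlicz norm `‖f‖_{φ,μ} = inf{λ > 0 : ∫ φ(f/λ) dμ ≤ φ(1) μ(S^{n-1})}`. -/
noncomputable def orliczNorm (n : ℕ) (φ : ℝ → ℝ)
    (μ : Measure (Metric.sphere (0 : EuclideanSpace ℝ (Fin n)) 1))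
    (f : Metric.sphere (0 : EuclideanSpace ℝ (Fin n)) 1 → ℝ) : ℝ :=
  sInf {lam : ℝ | 0 < lam ∧ ∫ x, φ (f x / lam) ∂μ ≤ φ 1 * (μ univ).toReal}

open Bornology
open scoped RealInnerProductSpace

lemma Bornology.isBounded_iUnion_of_eventually_subset {X : Type*} [Bornology X]
    {K : ℕ → Set X} {s : Set X} (hK : ∀ j, IsBounded (K j)) (hs : IsBounded s)
    (hev : ∀ᶠ j in atTop, K j ⊆ s) : IsBounded (⋃ j, K j) := by
  obtain ⟨N, hN⟩ := eventually_atTop.1 hev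
  refine (((isBounded_biUnion_finset (Finset.range N)).2 fun j _ => hK j).union hs).subset ?_
  refine iUnion_subset fun j => ?_
  rcases lt_or_ge j N with hj | hj
  · exact subset_union_of_subset_left (subset_biUnion_of_mem (Finset.mem_range.2 hj)) _
  · exact subset_union_of_subset_right (hN j hj) _

section SphereCap

variable {E : Type*} [NormedAddCommGroup E] [InnerProductSpace ℝ E]

local notation "𝕊" => Metric.sphere (0 : E) 1

def sphereCap (v : E) (δ : ℝ) : Set 𝕊 := {u | δ ≤ ⟪v, u⟫}

lemma sphereCap_subset_of_norm_sub_le {v w : E} {δ : ℝ} (h : ‖v - w‖ ≤ δ) :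
    sphereCap w (2 * δ) ⊆ sphereCap v δ := by
  intro u (hu : 2 * δ ≤ ⟪w, u⟫)
  have : ⟪w - v, u⟫ ≤ δ := by
    calc ⟪w - v, u⟫ ≤ ‖w - v‖ * ‖(u : E)‖ := real_inner_le_norm _ _
      _ ≤ δ := by rw [norm_eq_of_mem_sphere, mul_one, norm_sub_rev]; exact h
  show δ ≤ ⟪v, u⟫
  rw [inner_sub_left] at this
  linarith

variable [FiniteDimensional ℝ E] [MeasurableSpace E] [BorelSpace E]

lemma integral_max_inner_sub_le_measureReal_sphereCap (ν : Measure 𝕊) [IsFiniteMeasure ν]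
    (w : 𝕊) {δ : ℝ} (hδ : 0 ≤ δ) :
    ∫ u, max (⟪(w : E), u⟫ - δ) 0 ∂ν ≤ ν.real (sphereCap w δ) := by
  have hmeas : MeasurableSet (sphereCap (w : E) δ) :=
    measurableSet_le measurable_const (by fun_prop)
  rw [← integral_indicator_one hmeas]
  refine integral_mono ((Continuous.integrable_of_hasCompactSupport (by fun_prop)
    (.of_compactSpace _))) ((integrable_const 1).indicator hmeas) fun u => ?_
  by_cases hu : u ∈ sphereCap (w : E) δ
  · rw [indicator_of_mem hu, Pi.one_apply]
    have : ⟪(w : E), u⟫ ≤ 1 := by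
      simpa using real_inner_le_norm (w : E) u
    exact max_le (by linarith) zero_le_one
  · rw [indicator_of_notMem hu]
    exact (max_eq_right (sub_nonpos.2 (not_le.1 hu).le)).le

lemma exists_pos_le_integral_max_inner (μ : Measure 𝕊) [IsFiniteMeasure μ]
    (hμ : ∀ η : 𝕊, 0 < ∫ θ, max ⟪(η : E), θ⟫ 0 ∂μ) :
    ∃ ε > 0, ∀ η : 𝕊, ε ≤ ∫ θ, max ⟪(η : E), θ⟫ 0 ∂μ := by
  have hcont : Continuous fun η : 𝕊 => ∫ θ, max ⟪(η : E), θ⟫ 0 ∂μ := by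
    simpa using continuous_parametric_integral_of_continuous (μ := μ)
      (f := fun η θ : 𝕊 => max ⟪(η : E), θ⟫ 0) (by fun_prop) isCompact_univ
  obtain ⟨ε, hε, hle⟩ := isCompact_univ.exists_forall_le' hcont.continuousOn fun η _ => hμ η
  exact ⟨ε, hε, fun η => hle η (mem_univ η)⟩

lemma integral_max_inner_sub_mul_le (μ : Measure 𝕊) [IsFiniteMeasure μ] (v : 𝕊) {δ : ℝ}
    (hδ : 0 ≤ δ) :
    ∫ u, max ⟪(v : E), u⟫ 0 ∂μ - μ.real univ * δ ≤ ∫ u, max (⟪(v : E), u⟫ - δ) 0 ∂μ := by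
  have hint : Integrable (fun u : 𝕊 => max ⟪(v : E), u⟫ 0) μ :=
    Continuous.integrable_of_hasCompactSupport (by fun_prop) (.of_compactSpace _)
  rw [← smul_eq_mul, ← integral_const, ← integral_sub hint (integrable_const δ)]
  refine integral_mono (hint.sub (integrable_const δ))
    (Continuous.integrable_of_hasCompactSupport (by fun_prop) (.of_compactSpace _)) fun u => ?_
  rw [sub_le_iff_le_add]
  exact max_le (by linarith [le_max_left (⟪(v : E), u⟫ - δ) 0])
    (by linarith [le_max_right (⟪(v : E), u⟫ - δ) 0])

theorem exists_eventually_le_measureReal_sphereCap {ι : Type*} {l : Filter ι}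
    (μ : Measure 𝕊) [IsFiniteMeasure μ] (hμ : ∀ η : 𝕊, 0 < ∫ θ, max ⟪(η : E), θ⟫ 0 ∂μ)
    (ν : ι → Measure 𝕊) [∀ j, IsFiniteMeasure (ν j)]
    (hweak : ∀ f : C(𝕊, ℝ), Tendsto (fun j => ∫ x, f x ∂ν j) l (nhds (∫ x, f x ∂μ))) :
    ∃ δ > 0, ∃ c > 0, ∀ᶠ j in l, ∀ v : 𝕊, c ≤ (ν j).real (sphereCap v δ) := by
  obtain ⟨ε, hε, hεle⟩ := exists_pos_le_integral_max_inner μ hμ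
  set M := μ.real univ
  have hM : 0 ≤ M := measureReal_nonneg
  set δ := ε / (4 * (M + 1))
  have hδ : 0 < δ := by positivity
  have hlim : ∀ w : 𝕊, ε / 4 < ∫ u, max (⟪(w : E), u⟫ - 2 * δ) 0 ∂μ := by
    intro w
    have hδM : M * (2 * δ) ≤ ε / 2 := by
      rw [show M * (2 * δ) = ε / 2 * (M / (M + 1)) by simp only [δ]; field_simp; ring]
      exact mul_le_of_le_one_right (by positivity) ((div_le_one (by positivity)).2 (by linarith))
    linarith [hεle w, integral_max_inner_sub_mul_le μ w (by positivity : 0 ≤ 2 * δ)]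
  obtain ⟨t, -, ht, hcover⟩ := finite_cover_balls_of_compact (isCompact_univ (X := 𝕊)) hδ
  have hnet : ∀ᶠ j in l, ∀ w ∈ t, ε / 4 < ∫ u, max (⟪(w : E), u⟫ - 2 * δ) 0 ∂ν j :=
    ht.eventually_all.2 fun w _ =>
      (hweak ⟨fun u => max (⟪(w : E), u⟫ - 2 * δ) 0, by fun_prop⟩).eventually
        (lt_mem_nhds (hlim w))
  refine ⟨δ, hδ, ε / 4, by positivity, ?_⟩
  filter_upwards [hnet] with j hj v
  obtain ⟨w, hwt, hvw⟩ := mem_iUnion₂.1 (hcover (mem_univ v))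
  have hvw' : ‖(v : E) - w‖ ≤ δ := by
    rw [← dist_eq_norm, ← Subtype.dist_eq]; exact (Metric.mem_ball.1 hvw).le
  calc ε / 4 ≤ ∫ u, max (⟪(w : E), u⟫ - 2 * δ) 0 ∂ν j := (hj w hwt).le
    _ ≤ (ν j).real (sphereCap w (2 * δ)) :=
      integral_max_inner_sub_le_measureReal_sphereCap _ w (by positivity)
    _ ≤ (ν j).real (sphereCap v δ) := measureReal_mono (sphereCap_subset_of_norm_sub_le hvw')

end SphereCap

section SupportFunction

variable {n : ℕ} {K : Set (EuclideanSpace ℝ (Fin n))}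

lemma inner_le_suppFn (hK : IsCompact K) {x : EuclideanSpace ℝ (Fin n)} (hx : x ∈ K)
    (u : EuclideanSpace ℝ (Fin n)) : ⟪x, u⟫ ≤ suppFn n K u :=
  le_csSup (hK.image (by fun_prop)).bddAbove ⟨x, hx, rfl⟩

lemma suppFn_nonneg (hK : IsCompact K) (h0 : 0 ∈ K) (u : EuclideanSpace ℝ (Fin n)) :
    0 ≤ suppFn n K u := by
  simpa using inner_le_suppFn hK h0 u

lemma continuous_suppFn (hK : IsCompact K) : Continuous (suppFn n K) :=
  hK.continuous_sSup (f := fun u x => ⟪x, u⟫) (by fun_prop)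

end SupportFunction

section Orlicz

variable {n : ℕ} {φ : ℝ → ℝ}

local notation "𝕊" => Metric.sphere (0 : EuclideanSpace ℝ (Fin n)) 1

lemma MonotoneOn.nonneg_of_map_zero (hφm : MonotoneOn φ (Ici 0)) (hφ0 : φ 0 = 0) {s : ℝ}
    (hs : 0 ≤ s) : 0 ≤ φ s :=
  hφ0 ▸ hφm self_mem_Ici hs hs

lemma exists_lt_of_orliczNorm_lt {ν : Measure 𝕊} {f : 𝕊 → ℝ} {t : ℝ}
    (hpos : 0 < orliczNorm n φ ν f) (ht : orliczNorm n φ ν f < t) :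
    ∃ lam, 0 < lam ∧ lam < t ∧ ∫ u, φ (f u / lam) ∂ν ≤ φ 1 * ν.real univ := by
  unfold orliczNorm at hpos ht
  have hne : {lam : ℝ | 0 < lam ∧ ∫ u, φ (f u / lam) ∂ν ≤ φ 1 * (ν univ).toReal}.Nonempty := by
    refine nonempty_iff_ne_empty.2 fun h => ?_
    rw [h, Real.sInf_empty] at hpos
    exact lt_irrefl 0 hpos
  obtain ⟨lam, ⟨hlam, hint⟩, hlt⟩ := exists_lt_of_csInf_lt hne ht
  exact ⟨lam, hlam, hlt, hint⟩

/-- Markov's inequality for `φ (f / λ)`, with `λ < t` admissible in the definition of the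
Orlicz norm. -/
lemma phi_div_mul_measureReal_le_of_orliczNorm_lt (hφc : ContinuousOn φ (Ici 0))
    (hφm : MonotoneOn φ (Ici 0)) (hφ0 : φ 0 = 0) {ν : Measure 𝕊} [IsFiniteMeasure ν]
    {f : 𝕊 → ℝ} (hf : Continuous f) (hf0 : ∀ u, 0 ≤ f u) {t : ℝ}
    (hpos : 0 < orliczNorm n φ ν f) (ht : orliczNorm n φ ν f < t) {A : Set 𝕊} {a : ℝ}
    (ha : 0 ≤ a) (hA : ∀ u ∈ A, a ≤ f u) :
    φ (a / t) * ν.real A ≤ φ 1 * ν.real univ := by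
  obtain ⟨lam, hlam, hlt, hint⟩ := exists_lt_of_orliczNorm_lt hpos ht
  have hat : 0 ≤ a / t := div_nonneg ha (hpos.trans ht).le
  have hfl : ∀ u, 0 ≤ f u / lam := fun u => div_nonneg (hf0 u) hlam.le
  have hsub : A ⊆ {u | φ (a / t) ≤ φ (f u / lam)} := fun u hu =>
    hφm hat (hfl u) <| calc
      a / t ≤ a / lam := div_le_div_of_nonneg_left ha hlam hlt.le
      _ ≤ f u / lam := div_le_div_of_nonneg_right (hA u hu) hlam.le
  calc φ (a / t) * ν.real A ≤ φ (a / t) * ν.real {u | φ (a / t) ≤ φ (f u / lam)} :=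
        mul_le_mul_of_nonneg_left (measureReal_mono hsub)
          (hφm.nonneg_of_map_zero hφ0 hat)
    _ ≤ ∫ u, φ (f u / lam) ∂ν :=
        mul_meas_ge_le_integral_of_nonneg (ae_of_all _ fun u => hφm.nonneg_of_map_zero hφ0 (hfl u))
          ((hφc.comp_continuous (hf.div_const lam) hfl).integrable_of_hasCompactSupport
            (.of_compactSpace _)) _
    _ ≤ φ 1 * ν.real univ := hint

lemma phi_mul_le_of_orliczNorm_suppFn_eq_one (hφc : ContinuousOn φ (Ici 0))
    (hφm : MonotoneOn φ (Ici 0)) (hφ0 : φ 0 = 0) {ν : Measure 𝕊} [IsFiniteMeasure ν]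
    {K : Set (EuclideanSpace ℝ (Fin n))} (hK : IsCompact K) (h0 : 0 ∈ K)
    (hnorm : orliczNorm n φ ν (fun u => suppFn n K u) = 1) {δ c : ℝ} (hδ : 0 ≤ δ)
    (hcap : ∀ v : 𝕊, c ≤ ν.real (sphereCap v δ)) {x : EuclideanSpace ℝ (Fin n)} (hx : x ∈ K) :
    φ (‖x‖ * δ / 2) * c ≤ φ 1 * ν.real univ := by
  rcases eq_or_ne x 0 with rfl | hx0
  · simpa [hφ0] using mul_nonneg (hφm.nonneg_of_map_zero hφ0 zero_le_one) measureReal_nonneg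
  let v : 𝕊 := ⟨NormedSpace.normalize x, by simpa [NormedSpace.norm_normalize_eq_one_iff]⟩
  have hcapK : ∀ u ∈ sphereCap (v : EuclideanSpace ℝ (Fin n)) δ, ‖x‖ * δ ≤ suppFn n K u :=
    fun u (hu : δ ≤ ⟪NormedSpace.normalize x, u⟫) => calc
      ‖x‖ * δ ≤ ‖x‖ * ⟪NormedSpace.normalize x, u⟫ := mul_le_mul_of_nonneg_left hu (norm_nonneg _)
      _ = ⟪x, u⟫ := by rw [← real_inner_smul_left, NormedSpace.norm_smul_normalize]
      _ ≤ suppFn n K u := inner_le_suppFn hK hx u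
  calc φ (‖x‖ * δ / 2) * c ≤ φ (‖x‖ * δ / 2) * ν.real (sphereCap v δ) :=
        mul_le_mul_of_nonneg_left (hcap v) (hφm.nonneg_of_map_zero hφ0 (by positivity))
    _ ≤ φ 1 * ν.real univ :=
        phi_div_mul_measureReal_le_of_orliczNorm_lt hφc hφm hφ0
          (f := fun u : 𝕊 => suppFn n K u) ((continuous_suppFn hK).comp continuous_subtype_val)
          (fun u => suppFn_nonneg hK h0 u) (by rw [hnorm]; exact one_pos)
          (by rw [hnorm]; exact one_lt_two) (by positivity) hcapK

end Orlicz

theorem uniform_radius_bound_general (n : ℕ) (φ : ℝ → ℝ)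
    (hφc : ContinuousOn φ (Ici 0)) (hφm : StrictMonoOn φ (Ici 0))
    (hφ0 : φ 0 = 0) (hφtop : Tendsto φ atTop atTop)
    (μ : Measure (Metric.sphere (0 : EuclideanSpace ℝ (Fin n)) 1)) [IsFiniteMeasure μ]
    (hμsupp : ∀ η : Metric.sphere (0 : EuclideanSpace ℝ (Fin n)) 1,
      0 < ∫ θ, max (inner ℝ (η : EuclideanSpace ℝ (Fin n)) (θ : EuclideanSpace ℝ (Fin n)) : ℝ) 0 ∂μ)
    (μseq : ℕ → Measure (Metric.sphere (0 : EuclideanSpace ℝ (Fin n)) 1))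
    (hfin : ∀ j, IsFiniteMeasure (μseq j))
    (hweak : ∀ f : C(Metric.sphere (0 : EuclideanSpace ℝ (Fin n)) 1, ℝ),
      Tendsto (fun j => ∫ x, f x ∂(μseq j)) atTop (nhds (∫ x, f x ∂μ)))
    (K : ℕ → Set (EuclideanSpace ℝ (Fin n)))
    (hKcomp : ∀ j, IsCompact (K j))
    (h0K : ∀ j, (0 : EuclideanSpace ℝ (Fin n)) ∈ K j)
    (hnorm : ∀ j, orliczNorm n φ (μseq j) (fun u => suppFn n (K j) ↑u) = 1) :
    ∃ R : ℝ, 0 < R ∧ ∀ j, ∀ x ∈ K j, ‖x‖ ≤ R := by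
  have := hfin
  obtain ⟨δ, hδ, c, hc, hcap⟩ :=
    exists_eventually_le_measureReal_sphereCap (l := atTop) μ hμsupp μseq hweak
  have hmass : ∀ᶠ j in atTop, (μseq j).real univ ≤ μ.real univ + 1 := by
    have h := hweak (ContinuousMap.const _ 1)
    simp only [ContinuousMap.const_apply, integral_const, smul_eq_mul, mul_one] at h
    exact h.eventually_le_const (lt_add_one _)
  have hφ1 : 0 ≤ φ 1 := hφm.monotoneOn.nonneg_of_map_zero hφ0 zero_le_one
  obtain ⟨T, hT⟩ := (hφtop.eventually_gt_atTop
    (φ 1 * (μ.real univ + 1) / c)).exists_forall_of_atTop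
  have hlarge : ∀ᶠ j in atTop, K j ⊆ Metric.closedBall 0 (2 * T / δ) := by
    filter_upwards [hcap, hmass] with j hcapj hmassj x hx
    rw [Metric.mem_closedBall, dist_zero_right]
    by_contra! hbig
    have hφx := hT (‖x‖ * δ / 2) (by rw [div_lt_iff₀ hδ] at hbig; linarith)
    rw [div_lt_iff₀ hc] at hφx
    have := phi_mul_le_of_orliczNorm_suppFn_eq_one hφc hφm.monotoneOn hφ0 (hKcomp j) (h0K j)
      (hnorm j) hδ.le hcapj hx
    nlinarith
  obtain ⟨R, hR, hRK⟩ := (isBounded_iUnion_of_eventually_subset (fun j => (hKcomp j).isBounded)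
    Metric.isBounded_closedBall hlarge).exists_pos_norm_le
  exact ⟨R, hR, fun j x hx => hRK x (mem_iUnion_of_mem j hx)⟩

/-- if `μ` is a finite Borel measure on `S^{n-1}` whose support is not contained
in any closed hemisphere, `μ_j → μ` weakly, and `K_j` are convex bodies containing the origin
with `‖h_{K_j}‖_{φ,μ_j} = 1`, then the maximal radii of the `K_j` are uniformly bounded. -/
theorem uniform_radius_bound (n : ℕ) (φ : ℝ → ℝ)
    (hφc : ContinuousOn φ (Ici 0)) (hφm : StrictMonoOn φ (Ici 0))
    (hφ0 : φ 0 = 0) (hφtop : Tendsto φ atTop atTop)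
    (μ : Measure (Metric.sphere (0 : EuclideanSpace ℝ (Fin n)) 1)) [IsFiniteMeasure μ]
    (hμsupp : ∀ η : Metric.sphere (0 : EuclideanSpace ℝ (Fin n)) 1,
      0 < ∫ θ, max (inner ℝ (η : EuclideanSpace ℝ (Fin n)) (θ : EuclideanSpace ℝ (Fin n)) : ℝ) 0 ∂μ)
    (μseq : ℕ → Measure (Metric.sphere (0 : EuclideanSpace ℝ (Fin n)) 1))
    (hfin : ∀ j, IsFiniteMeasure (μseq j))
    (hweak : ∀ f : C(Metric.sphere (0 : EuclideanSpace ℝ (Fin n)) 1, ℝ),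
      Tendsto (fun j => ∫ x, f x ∂(μseq j)) atTop (nhds (∫ x, f x ∂μ)))
    (K : ℕ → Set (EuclideanSpace ℝ (Fin n)))
    (hKconv : ∀ j, Convex ℝ (K j)) (hKcomp : ∀ j, IsCompact (K j))
    (hKint : ∀ j, (interior (K j)).Nonempty)
    (h0K : ∀ j, (0 : EuclideanSpace ℝ (Fin n)) ∈ K j)
    (hnorm : ∀ j, orliczNorm n φ (μseq j) (fun u => suppFn n (K j) ↑u) = 1) :
    ∃ R : ℝ, 0 < R ∧ ∀ j, ∀ x ∈ K j, ‖x‖ ≤ R :=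
  uniform_radius_bound_general n φ hφc hφm hφ0 hφtop μ hμsupp μseq hfin hweak K hKcomp h0K hnorm
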